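/- Small basis for one-step predecessors of upward closures in a k-NRCS: let N be a k-NRCS, t a transition of N, and C a configuration. For every configuration C' such that C' →_t D holds for some configuration D with C ≤_is D, there exists a configuration C'' such that C'' ≤_is C', the number of nodes of C'' is at most (number of nodes of C) + k + 1, and C'' →_t D'' holds for some configuration D'' with C ≤_is D''. -/

import Mathlib

/-- Finite rooted ordered representation of finite rooted *unordered* labelled trees.
Unorderedness is handled by comparing trees up to permutation of children. -/
inductive STree (Q : Type) : Type
  | node (label : Q) (children : List (STree Q)) : STree Q

namespace STree

variable {Q : Type}

/-- The label of the root. -/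
def rootLabel : STree Q → Q
  | node a _ => a

/-- The children of the root. -/
def children : STree Q → List (STree Q)
  | node _ ts => ts

end STree

mutual
  /-- Number of nodes. -/
  def STree.size {Q : Type} : STree Q → ℕ
    | .node _ ts => 1 + STree.sizeL ts
  /-- Total number of nodes of a list of trees. -/
  def STree.sizeL {Q : Type} : List (STree Q) → ℕ
    | [] => 0
    | t :: ts => STree.size t + STree.sizeL ts
end

mutual
  /-- Height (a single node has height 0). -/
  def STree.height {Q : Type} : STree Q → ℕ
    | .node _ ts => STree.heightL ts
  /-- One plus the maximal height of a list of trees (0 for the empty list). -/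
  def STree.heightL {Q : Type} : List (STree Q) → ℕ
    | [] => 0
    | t :: ts => max (STree.height t + 1) (STree.heightL ts)
end

namespace STree

end STree

mutual
  /-- `TreeLe C C'` is the induced-subtree ordering `C ≤_is C'`: `C` is obtained from `C'`
  by deleting whole subtrees (equivalently, there is a root-preserving, label-preserving
  injection of the nodes of `C` into the nodes of `C'` such that two nodes are adjacent in
  `C` iff their images are adjacent in `C'`). -/
  inductive TreeLe {Q : Type} : STree Q → STree Q → Prop
    | node {a : Q} {ts us : List (STree Q)} :
        ForestLe ts us → TreeLe (.node a ts) (.node a us)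

  /-- An (unordered) embedding of a list of trees into another: an injection matching each
  tree on the left with a distinct tree on the right that dominates it w.r.t. `TreeLe`. -/
  inductive ForestLe {Q : Type} : List (STree Q) → List (STree Q) → Prop
    | nil (us : List (STree Q)) : ForestLe [] us
    | cons {t u : STree Q} {ts us : List (STree Q)} :
        TreeLe t u → ForestLe ts us → ForestLe (t :: ts) (u :: us)
    | skip {u : STree Q} {ts us : List (STree Q)} :
        ForestLe ts us → ForestLe ts (u :: us)
    | permR {ts us us' : List (STree Q)} :
        ForestLe ts us → us.Perm us' → ForestLe ts us'
end

mutual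
  /-- Equality of trees as finite rooted *unordered* labelled trees. -/
  inductive TreeEquiv {Q : Type} : STree Q → STree Q → Prop
    | node {a : Q} {ts us : List (STree Q)} :
        ForestEquiv ts us → TreeEquiv (.node a ts) (.node a us)

  /-- Lists of trees matched bijectively (up to permutation) by `TreeEquiv`. -/
  inductive ForestEquiv {Q : Type} : List (STree Q) → List (STree Q) → Prop
    | nil : ForestEquiv [] []
    | cons {t u : STree Q} {ts us : List (STree Q)} :
        TreeEquiv t u → ForestEquiv ts us → ForestEquiv (t :: ts) (u :: us)
    | permR {ts us us' : List (STree Q)} :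
        ForestEquiv ts us → us.Perm us' → ForestEquiv ts us'
end

/-- `HasPath ps t` : there is a path from the root of `t` (inclusive) whose successive
labels are exactly the (nonempty) list `ps`. -/
inductive HasPath {Q : Type} : List Q → STree Q → Prop
  | single (p : Q) (ts : List (STree Q)) : HasPath [p] (.node p ts)
  | cons (p : Q) {ps : List Q} {ts : List (STree Q)} {t : STree Q} :
      t ∈ ts → HasPath ps t → HasPath (p :: ps) (.node p ts)

/-- `mkChain q qs` is the path-shaped tree with labels `q, qs...`. -/
def mkChain {Q : Type} : Q → List Q → STree Q
  | q, [] => .node q []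
  | q, r :: rest => .node q [mkChain r rest]

/-- Attach the (possibly empty) fresh chain labelled `qs` as a new child. -/
def attachChain {Q : Type} : List Q → List (STree Q) → List (STree Q)
  | [], ts => ts
  | r :: rest, ts => mkChain r rest :: ts

/-- Application of an update transition `(p_0,…,p_i) →u (q_0,…,q_j)` (given as the two label
lists) to a configuration: fire along a root path labelled `p_0,…,p_i`, relabel the common
prefix, and either create fresh nodes labelled `q_{i+1},…,q_j` (if `i ≤ j`) or delete the
subtree rooted at `v_{j+1}` (if `j < i`). -/
inductive UStep {Q : Type} : List Q → List Q → STree Q → STree Q → Prop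
  | last (p q : Q) (rest : List Q) (ts : List (STree Q)) :
      UStep [p] (q :: rest) (.node p ts) (.node q (attachChain rest ts))
  | delete (p q : Q) {ps : List Q} (hps : ps ≠ []) {t : STree Q} (l r : List (STree Q)) :
      HasPath ps t →
      UStep (p :: ps) [q] (.node p (l ++ t :: r)) (.node q (l ++ r))
  | go (p q : Q) {ps qs : List Q} (hps : ps ≠ []) (hqs : qs ≠ []) {t t' : STree Q}
      (l r : List (STree Q)) :
      UStep ps qs t t' →
      UStep (p :: ps) (q :: qs) (.node p (l ++ t :: r)) (.node q (l ++ t' :: r))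

/-- Application of a reset transition `(p_0,…,p_i) →r,x (q_0,…,q_i)` to a configuration:
fire along a root path labelled `p_0,…,p_i`, relabel it to `q_0,…,q_i`, and delete every
subtree rooted at a child of the last path node whose label is `x`. -/
inductive RStep {Q : Type} [DecidableEq Q] : List Q → Q → List Q → STree Q → STree Q → Prop
  | last (p q x : Q) (ts : List (STree Q)) :
      RStep [p] x [q] (.node p ts) (.node q (ts.filter (fun t => t.rootLabel ≠ x)))
  | go (p q x : Q) {ps qs : List Q} (hps : ps ≠ []) {t t' : STree Q} (l r : List (STree Q)) :
      RStep ps x qs t t' →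
      RStep (p :: ps) x (q :: qs) (.node p (l ++ t :: r)) (.node q (l ++ t' :: r))

/-- A transition of a `k`-NRCS : either an update transition or a reset transition,
presented by its label lists. -/
inductive NTrans (Q : Type) : Type
  | upd (ps qs : List Q) : NTrans Q
  | rst (ps : List Q) (x : Q) (qs : List Q) : NTrans Q

/-- A `k`-NRCS `(Q, δ_u, δ_r)` : a finite set of update transitions
`δ_u ⊆ ⋃_{1 ≤ i,j ≤ k+1} Q^i × Q^j` and a finite set of reset transitions
`δ_r ⊆ ⋃_{1 ≤ i ≤ k} Q^i × Q × Q^i` (the state set is the ambient type `Q`). -/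
structure NRCS (Q : Type) [DecidableEq Q] (k : ℕ) where
  update : Finset (List Q × List Q)
  reset : Finset (List Q × Q × List Q)
  update_wf : ∀ t ∈ update, 1 ≤ t.1.length ∧ t.1.length ≤ k + 1 ∧
      1 ≤ t.2.length ∧ t.2.length ≤ k + 1
  reset_wf : ∀ t ∈ reset, 1 ≤ t.1.length ∧ t.1.length ≤ k ∧ t.2.2.length = t.1.length

namespace NRCS

variable {Q : Type} [DecidableEq Q] {k : ℕ}

/-- Membership of a transition in an NRCS. -/
def hasTrans (N : NRCS Q k) : NTrans Q → Prop
  | .upd ps qs => (ps, qs) ∈ N.update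
  | .rst ps x qs => (ps, x, qs) ∈ N.reset

/-- `C →_t C'` : a step via the particular transition `t`. -/
def TransStep : NTrans Q → STree Q → STree Q → Prop
  | .upd ps qs, C, C' => UStep ps qs C C'
  | .rst ps x qs, C, C' => RStep ps x qs C C'

/-- The step relation `C → C'` of the NRCS `N`. -/
def Step (N : NRCS Q k) (C C' : STree Q) : Prop :=
  ∃ t : NTrans Q, N.hasTrans t ∧ TransStep t C C'

/-- Reachability `C →* C'` (reflexive-transitive closure of the step relation). -/
def Reaches (N : NRCS Q k) : STree Q → STree Q → Prop :=
  Relation.ReflTransGen N.Step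

/-- The lossy step relation: first delete some whole subtrees, then take a standard step. -/
def LossyStep (N : NRCS Q k) (C D : STree Q) : Prop :=
  ∃ C₀ : STree Q, TreeLe C₀ C ∧ N.Step C₀ D

/-- Lossy reachability. -/
def LossyReaches (N : NRCS Q k) : STree Q → STree Q → Prop :=
  Relation.ReflTransGen N.LossyStep

end NRCS

/-!
Prune `C'` to the path along which `t` fires (at most `k + 1` nodes) together with, below
each node of that path, only those children whose images in `D` receive children of `C`, each
pruned recursively to the size of the subtree of `C` it receives. The pruned tree still fires
`t`: subtrees deleted by the step were never needed, nodes created by an update need no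
preimage, and the children kept at the end of a reset path survive the reset because their
images do.
-/

variable {Q : Type}

mutual
theorem TreeLe.refl : ∀ t : STree Q, TreeLe t t
  | .node _ ts => .node (ForestLe.refl ts)
theorem ForestLe.refl : ∀ ts : List (STree Q), ForestLe ts ts
  | [] => .nil []
  | t :: ts => .cons (TreeLe.refl t) (ForestLe.refl ts)
end

theorem TreeLe.rootLabel_eq {t u : STree Q} (h : TreeLe t u) : t.rootLabel = u.rootLabel := by
  cases h; rfl

theorem ForestLe.of_forall₂_of_sublist {ts vs us : List (STree Q)}
    (hf : List.Forall₂ TreeLe ts vs) (hsl : vs.Sublist us) : ForestLe ts us := by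
  induction hsl generalizing ts with
  | slnil => cases hf; exact .nil _
  | cons _ _ ih => exact .skip (ih hf)
  | cons_cons _ _ ih =>
    cases hf with
    | cons htu hf => exact .cons htu (ih hf)

theorem forestLe_iff_exists_forall₂_subperm {ts us : List (STree Q)} :
    ForestLe ts us ↔ ∃ vs, List.Forall₂ TreeLe ts vs ∧ vs.Subperm us := by
  constructor
  · intro h
    refine ForestLe.rec (motive_1 := fun _ _ _ => True)
      (motive_2 := fun ts us _ => ∃ vs, List.Forall₂ TreeLe ts vs ∧ vs.Subperm us)
      (fun _ _ => trivial) (fun _ => ⟨[], .nil, List.nil_subperm⟩) ?_ ?_ ?_ h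
    · rintro _ u _ _ htu _ _ ⟨vs, hf, hsp⟩
      exact ⟨u :: vs, .cons htu hf, (List.subperm_cons u).mpr hsp⟩
    · rintro u _ _ _ ⟨vs, hf, hsp⟩
      exact ⟨vs, hf, hsp.cons_right u⟩
    · rintro _ _ _ _ hp ⟨vs, hf, hsp⟩
      exact ⟨vs, hf, hsp.trans hp.subperm⟩
  · rintro ⟨vs, hf, hsp⟩
    obtain ⟨ws, hws, hsl⟩ := List.subperm_iff.mp hsp
    exact .permR (.of_forall₂_of_sublist hf hsl) hws

namespace ForestLe

variable {ts ts' us ws : List (STree Q)}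

theorem perm_left (h : ForestLe ts us) (hp : ts.Perm ts') : ForestLe ts' us := by
  obtain ⟨vs, hf, hsp⟩ := forestLe_iff_exists_forall₂_subperm.mp h
  obtain ⟨vs', hf', hvs⟩ := List.perm_comp_forall₂ hp.symm hf
  exact forestLe_iff_exists_forall₂_subperm.mpr ⟨vs', hf', hvs.subperm.trans hsp⟩

theorem mono_right (h : ForestLe ts us) (hsl : us.Sublist ws) : ForestLe ts ws := by
  obtain ⟨vs, hf, hsp⟩ := forestLe_iff_exists_forall₂_subperm.mp h
  exact forestLe_iff_exists_forall₂_subperm.mpr ⟨vs, hf, hsp.trans hsl.subperm⟩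

theorem singleton_of_mem {t u : STree Q} (h : TreeLe t u) (hu : u ∈ us) : ForestLe [t] us :=
  forestLe_iff_exists_forall₂_subperm.mpr
    ⟨[u], .cons h .nil, List.singleton_subperm_iff.mpr hu⟩

theorem cons_of_append {t u : STree Q} {l r : List (STree Q)} (htu : TreeLe t u)
    (h : ForestLe ts (l ++ r)) : ForestLe (t :: ts) (l ++ u :: r) :=
  .permR (.cons htu h) List.perm_middle.symm

theorem exists_of_mem (h : ForestLe ts us) {t : STree Q} (ht : t ∈ ts) :
    ∃ u ∈ us, TreeLe t u := by
  obtain ⟨vs, hf, hsp⟩ := forestLe_iff_exists_forall₂_subperm.mp h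
  suffices ∃ v ∈ vs, TreeLe t v from
    let ⟨v, hv, htv⟩ := this; ⟨v, hsp.subset hv, htv⟩
  clear h hsp
  induction hf with
  | nil => cases ht
  | cons htv _ ih =>
    rcases List.mem_cons.mp ht with rfl | ht
    · exact ⟨_, List.mem_cons_self, htv⟩
    · obtain ⟨v, hv, htv⟩ := ih ht
      exact ⟨v, List.mem_cons_of_mem _ hv, htv⟩

theorem cons_right_cases {u : STree Q} (h : ForestLe ts (u :: us)) :
    ForestLe ts us ∨ ∃ t ts', ts.Perm (t :: ts') ∧ TreeLe t u ∧ ForestLe ts' us := by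
  classical
  obtain ⟨vs, hf, hsp⟩ := forestLe_iff_exists_forall₂_subperm.mp h
  have hrest : (vs.erase u).Subperm us := by simpa using hsp.erase u
  by_cases hu : u ∈ vs
  · obtain ⟨ts₁, hts, hf₁⟩ :
        Relation.Comp List.Perm (List.Forall₂ TreeLe) ts (u :: vs.erase u) := by
      rw [← List.forall₂_comp_perm_eq_perm_comp_forall₂]
      exact ⟨vs, hf, List.perm_cons_erase hu⟩
    cases hf₁ with
    | cons htu hf₁ =>
      exact .inr ⟨_, _, hts, htu,
        forestLe_iff_exists_forall₂_subperm.mpr ⟨_, hf₁, hrest⟩⟩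
  · rw [List.erase_of_not_mem hu] at hrest
    exact .inl (forestLe_iff_exists_forall₂_subperm.mpr ⟨vs, hf, hrest⟩)

end ForestLe

namespace STree

@[simp] theorem size_node (a : Q) (ts : List (STree Q)) :
    (node a ts).size = 1 + sizeL ts := by
  simp [size]

@[simp] theorem sizeL_nil : sizeL ([] : List (STree Q)) = 0 := by
  simp [sizeL]

@[simp] theorem sizeL_cons (t : STree Q) (ts : List (STree Q)) :
    sizeL (t :: ts) = t.size + sizeL ts := by
  simp [sizeL]

theorem sizeL_eq_sum (ts : List (STree Q)) : sizeL ts = (ts.map size).sum := by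
  induction ts with
  | nil => rfl
  | cons t ts ih => simp [ih]

theorem sizeL_perm {ts us : List (STree Q)} (h : ts.Perm us) : sizeL ts = sizeL us := by
  simpa only [sizeL_eq_sum] using (h.map size).sum_eq

end STree

theorem HasPath.exists_le_size_eq_length {ps : List Q} {t : STree Q} (h : HasPath ps t) :
    ∃ t₀, TreeLe t₀ t ∧ HasPath ps t₀ ∧ t₀.size = ps.length := by
  induction h with
  | single p ts => exact ⟨.node p [], .node (.nil ts), .single p [], by simp⟩
  | cons p hmem _ ih =>
    obtain ⟨t₀, hle, hpath, hsize⟩ := ih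
    exact ⟨.node p [t₀], .node (.singleton_of_mem hle hmem),
      .cons p (List.mem_singleton_self _) hpath,
      by simp only [STree.size_node, STree.sizeL_cons, STree.sizeL_nil, List.length_cons, hsize]
         omega⟩

theorem ForestLe.exists_attachChain {cs ts : List (STree Q)} {rest : List Q}
    (h : ForestLe cs (attachChain rest ts)) :
    ∃ cs', ForestLe cs' ts ∧ ForestLe cs (attachChain rest cs') ∧
      STree.sizeL cs' ≤ STree.sizeL cs := by
  cases rest with
  | nil => exact ⟨cs, h, .refl cs, le_rfl⟩
  | cons r rest =>
    rcases ForestLe.cons_right_cases h with hno | ⟨c, cs', hperm, hc, hrest⟩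
    · exact ⟨cs, hno, .skip (.refl cs), le_rfl⟩
    · refine ⟨cs', hrest, (ForestLe.cons hc (.refl cs')).perm_left hperm.symm, ?_⟩
      simp [STree.sizeL_perm hperm]

theorem UStep.exists_small_source {ps qs : List Q} {A D : STree Q} (h : UStep ps qs A D) :
    ∃ A₀ D₀, TreeLe A₀ A ∧ UStep ps qs A₀ D₀ ∧ A₀.size ≤ ps.length := by
  induction h with
  | last p q rest ts => exact ⟨.node p [], _, .node (.nil ts), .last p q rest [], by simp⟩
  | delete p q hps l r hpath =>
    obtain ⟨t₀, hle, hpath₀, hsize⟩ := hpath.exists_le_size_eq_length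
    exact ⟨.node p [t₀], .node q [], .node (.singleton_of_mem hle (by simp)),
      .delete p q hps [] [] hpath₀, by simp [hsize, add_comm]⟩
  | go p q hps hqs l r _ ih =>
    obtain ⟨A₀, D₀, hle, hstep, hsize⟩ := ih
    exact ⟨.node p [A₀], .node q [D₀], .node (.singleton_of_mem hle (by simp)),
      .go p q hps hqs [] [] hstep,
      by simp only [STree.size_node, STree.sizeL_cons, STree.sizeL_nil, List.length_cons]
         omega⟩

theorem RStep.exists_small_source [DecidableEq Q] {ps qs : List Q} {x : Q} {A D : STree Q}
    (h : RStep ps x qs A D) :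
    ∃ A₀ D₀, TreeLe A₀ A ∧ RStep ps x qs A₀ D₀ ∧ A₀.size ≤ ps.length := by
  induction h with
  | last p q x ts => exact ⟨.node p [], _, .node (.nil ts), .last p q x [], by simp⟩
  | go p q x hps l r _ ih =>
    obtain ⟨A₀, D₀, hle, hstep, hsize⟩ := ih
    exact ⟨.node p [A₀], .node q [D₀], .node (.singleton_of_mem hle (by simp)),
      .go p q x hps [] [] hstep,
      by simp only [STree.size_node, STree.sizeL_cons, STree.sizeL_nil, List.length_cons]
         omega⟩

theorem exists_small_pred_children {S : STree Q → STree Q → Prop} {n : ℕ}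
    {t t' : STree Q} {cs l r : List (STree Q)}
    (hsource : ∃ A₀ D₀, TreeLe A₀ t ∧ S A₀ D₀ ∧ A₀.size ≤ n)
    (hpred : ∀ {C : STree Q}, TreeLe C t' →
      ∃ A₀ D₀, TreeLe A₀ t ∧ S A₀ D₀ ∧ TreeLe C D₀ ∧ A₀.size ≤ C.size + n)
    (h : ForestLe cs (l ++ t' :: r)) :
    ∃ A₀ D₀ cs', ForestLe (A₀ :: cs') (l ++ t :: r) ∧ S A₀ D₀ ∧
      ForestLe cs (D₀ :: cs') ∧ STree.sizeL (A₀ :: cs') ≤ STree.sizeL cs + n := by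
  rcases (ForestLe.permR h List.perm_middle).cons_right_cases with
    hno | ⟨c, cs', hperm, hc, hrest⟩
  · obtain ⟨A₀, D₀, hle, hS, hsize⟩ := hsource
    exact ⟨A₀, D₀, cs, .cons_of_append hle hno, hS, .skip (.refl cs), by
      simp only [STree.sizeL_cons]; omega⟩
  · obtain ⟨A₀, D₀, hle, hS, hcD, hsize⟩ := hpred hc
    refine ⟨A₀, D₀, cs', .cons_of_append hle hrest, hS,
      (ForestLe.cons hcD (.refl cs')).perm_left hperm.symm, ?_⟩
    simp only [STree.sizeL_perm hperm, STree.sizeL_cons]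
    omega

theorem UStep.exists_small_pred {ps qs : List Q} {A D : STree Q} (h : UStep ps qs A D)
    {C : STree Q} (hC : TreeLe C D) :
    ∃ A₀ D₀, TreeLe A₀ A ∧ UStep ps qs A₀ D₀ ∧ TreeLe C D₀ ∧
      A₀.size ≤ C.size + ps.length := by
  induction h generalizing C with
  | last p q rest ts =>
    obtain ⟨hf⟩ := hC
    obtain ⟨cs', hle, hcov, hsize⟩ := hf.exists_attachChain
    exact ⟨.node p cs', _, .node hle, .last p q rest cs', .node hcov,
      by simp only [STree.size_node, List.length_cons]; omega⟩
  | delete p q hps l r hpath =>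
    obtain ⟨hf⟩ := hC
    obtain ⟨t₀, hle, hpath₀, hsize⟩ := hpath.exists_le_size_eq_length
    exact ⟨.node p (t₀ :: _), _, .node (.cons_of_append hle hf), .delete p q hps [] _ hpath₀,
      .refl _,
      by simp only [STree.size_node, STree.sizeL_cons, List.length_cons, hsize]; omega⟩
  | go p q hps hqs l r hstep ih =>
    obtain ⟨hf⟩ := hC
    obtain ⟨A₀, D₀, cs', hle, hS, hcov, hsize⟩ :=
      exists_small_pred_children hstep.exists_small_source ih hf
    exact ⟨.node p (A₀ :: cs'), _, .node hle, .go p q hps hqs [] cs' hS, .node hcov,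
      by simp only [STree.size_node, STree.sizeL_cons, List.length_cons] at hsize ⊢
         omega⟩

theorem RStep.exists_small_pred [DecidableEq Q] {ps qs : List Q} {x : Q} {A D : STree Q}
    (h : RStep ps x qs A D) {C : STree Q} (hC : TreeLe C D) :
    ∃ A₀ D₀, TreeLe A₀ A ∧ RStep ps x qs A₀ D₀ ∧ TreeLe C D₀ ∧
      A₀.size ≤ C.size + ps.length := by
  induction h generalizing C with
  | last p q x ts =>
    obtain ⟨hf⟩ := hC
    have hkept : ∀ c : STree Q, c ∈ _ → c.rootLabel ≠ x := fun c hc => by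
      obtain ⟨u, hu, hcu⟩ := hf.exists_of_mem hc
      simpa [hcu.rootLabel_eq] using List.of_mem_filter hu
    refine ⟨.node p _, _, .node (hf.mono_right List.filter_sublist), .last p q x _, ?_, by simp⟩
    rw [List.filter_eq_self.mpr (by simpa using hkept)]
    exact .refl _
  | go p q x hps l r hstep ih =>
    obtain ⟨hf⟩ := hC
    obtain ⟨A₀, D₀, cs', hle, hS, hcov, hsize⟩ :=
      exists_small_pred_children hstep.exists_small_source ih hf
    exact ⟨.node p (A₀ :: cs'), _, .node hle, .go p q x hps [] cs' hS, .node hcov,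
      by simp only [STree.size_node, STree.sizeL_cons, List.length_cons] at hsize ⊢
         omega⟩

/-- Small basis for one-step predecessors of upward closures in a `k`-NRCS:
let `N` be a `k`-NRCS, `t` a transition of `N`, and `C` a configuration. For every
configuration `C'` such that `C' →_t D` holds for some configuration `D` with `C ≤_is D`,
there exists a configuration `C''` such that `C'' ≤_is C'`, the number of nodes of `C''` is
at most (number of nodes of `C`) + `k` + 1, and `C'' →_t D''` holds for some configuration
`D''` with `C ≤_is D''`. -/
theorem nrcs_pred_small_basis
    {Q : Type} [DecidableEq Q] [Fintype Q] {k : ℕ} (hk : 1 ≤ k)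
    (N : NRCS Q k) (t : NTrans Q) (ht : N.hasTrans t)
    (C : STree Q) (hC : C.height ≤ k) (C' : STree Q) (hC' : C'.height ≤ k)
    (h : ∃ D : STree Q, NRCS.TransStep t C' D ∧ TreeLe C D) :
    ∃ C'' : STree Q, TreeLe C'' C' ∧ C''.size ≤ C.size + k + 1 ∧
      ∃ D'' : STree Q, NRCS.TransStep t C'' D'' ∧ TreeLe C D'' := by
  obtain ⟨D, hstep, hCD⟩ := h
  cases t with
  | upd ps qs =>
    obtain ⟨C'', D'', hle, hstep'', hCD'', hsize⟩ := UStep.exists_small_pred hstep hCD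
    have hlen : ps.length ≤ k + 1 := (N.update_wf (ps, qs) ht).2.1
    exact ⟨C'', hle, by omega, D'', hstep'', hCD''⟩
  | rst ps x qs =>
    obtain ⟨C'', D'', hle, hstep'', hCD'', hsize⟩ := RStep.exists_small_pred hstep hCD
    have hlen : ps.length ≤ k := (N.reset_wf (ps, x, qs) ht).2.1
    exact ⟨C'', hle, by omega, D'', hstep'', hCD''⟩
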